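/- arXiv:1708.00216 — 2 statements merged into one kernel-verified Lean document; each statement's English description precedes it below -/
import Mathlib

section
/- Let S be a half strip with ℝ×[0,1) ⊆ S ⊆ ℝ×[0,1]. Then there exists a half strip S' with ℝ×[0,1) ⊆ S' ⊆ S and a homeomorphism h : S → S' such that: the closures of the boundary intervals of ∂₊S' = S' ∩ (ℝ×{1}) are bounded in ℝ² and pairwise disjoint; h is the identity on ℝ×{0}; and h preserves the second coordinate. -/
/-!
Write `S = ℝ × [0, 1) ∪ U × {1}` with `U ⊆ ℝ` open. Conjugating by `arctan` turns `U` into an open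
`W ⊆ (-π/2, π/2)`, all of whose components `(a, b)` are bounded. The new upper boundary consists of
the middle halves `(a + (b - a)/4, a + 3(b - a)/4)` of these components (pulled back by `arctan`);
their closures are isolated from each other.

It is the inverse homeomorphism that has a closed form: on each component, at height `y`, it
applies in the affine coordinate of `(a, b)` a piecewise linear map of `[0, 1]` that is the
identity for `y = 0`, a homeomorphism for `y < 1`, and stretches `[1/4, 3/4]` onto `[0, 1]` for
`y = 1`. It moves every point by at most its distance to the complement of `W`, which gives
continuity across the boundary of `W`, and it is strictly increasing on every horizontal fiber,
which makes its inverse continuous.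
-/

open Set

/-- A half strip: ℝ×[0,1) ⊆ S ⊆ ℝ×[0,1], open in ℝ×[0,1]. -/
def IsHalfStrip (S : Set (ℝ × ℝ)) : Prop :=
  (univ ×ˢ Ico (0:ℝ) 1) ⊆ S ∧ S ⊆ univ ×ˢ Icc (0:ℝ) 1 ∧
  ∃ U : Set (ℝ × ℝ), IsOpen U ∧ S = U ∩ (univ ×ˢ Icc (0:ℝ) 1)

/-- The upper boundary ∂₊S = S ∩ (ℝ×{1}) of a half strip. -/
def upBd (S : Set (ℝ × ℝ)) : Set (ℝ × ℝ) := S ∩ {p | p.2 = 1}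

open Filter Function Real Topology

def halfStripOf (U : Set ℝ) : Set (ℝ × ℝ) := univ ×ˢ Ico 0 1 ∪ U ×ˢ {1}

theorem halfStripOf_eq (U : Set ℝ) :
    halfStripOf U = (univ ×ˢ Iio 1 ∪ U ×ˢ univ) ∩ univ ×ˢ Icc 0 1 := by
  ext ⟨x, y⟩
  simp only [halfStripOf, mem_union, mem_prod, mem_univ, mem_Ico, mem_Iio, mem_Icc,
    mem_singleton_iff, mem_inter_iff, true_and, and_true]
  constructor
  · rintro (⟨h0, h1⟩ | ⟨hx, rfl⟩)
    · exact ⟨Or.inl h1, h0, h1.le⟩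
    · exact ⟨Or.inr hx, zero_le_one, le_rfl⟩
  · rintro ⟨h | hx, h0, h1⟩
    · exact Or.inl ⟨h0, h⟩
    · exact h1.lt_or_eq.imp (fun h => ⟨h0, h⟩) (fun h => ⟨hx, h⟩)

theorem isHalfStrip_halfStripOf {U : Set ℝ} (hU : IsOpen U) : IsHalfStrip (halfStripOf U) :=
  ⟨subset_union_left, (halfStripOf_eq U).trans_subset inter_subset_right, _,
    (isOpen_univ.prod isOpen_Iio).union (hU.prod isOpen_univ), halfStripOf_eq U⟩

theorem IsHalfStrip.exists_eq_halfStripOf {S : Set (ℝ × ℝ)} (hS : IsHalfStrip S) :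
    ∃ U : Set ℝ, IsOpen U ∧ S = halfStripOf U := by
  obtain ⟨hlow, -, O, hO, rfl⟩ := hS
  refine ⟨(·, 1) ⁻¹' O, hO.preimage (by fun_prop), Subset.antisymm ?_ ?_⟩
  · rintro ⟨x, y⟩ ⟨hO, -, h0, h1⟩
    rcases h1.lt_or_eq with h1 | rfl
    · exact Or.inl ⟨trivial, h0, h1⟩
    · exact Or.inr ⟨hO, rfl⟩
  · rintro ⟨x, y⟩ (hp | ⟨hx, rfl : y = 1⟩)
    · exact hlow hp
    · exact ⟨hx, trivial, zero_le_one, le_rfl⟩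

theorem halfStripOf_mono {U V : Set ℝ} (h : U ⊆ V) : halfStripOf U ⊆ halfStripOf V :=
  union_subset_union_right _ (prod_mono h subset_rfl)

theorem upBd_halfStripOf (V : Set ℝ) : upBd (halfStripOf V) = V ×ˢ {1} := by
  ext ⟨x, y⟩
  simp only [upBd, halfStripOf, mem_inter_iff, mem_union, mem_prod, mem_univ, mem_Ico,
    mem_singleton_iff, mem_ofPred_eq, true_and]
  constructor
  · rintro ⟨⟨-, h⟩ | h, rfl⟩
    · exact absurd h (lt_irrefl 1)
    · exact h
  · rintro ⟨hx, rfl⟩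
    exact ⟨Or.inr ⟨hx, rfl⟩, rfl⟩

def HasSeparatedComponents (V : Set ℝ) : Prop :=
  ∀ x ∈ V, ∃ m M O, x ∈ Ioo m M ∧ IsOpen O ∧ Icc m M ⊆ O ∧ O ∩ V = Ioo m M

theorem connectedComponentIn_prod_singleton {V : Set ℝ} {m M x : ℝ} (c : ℝ)
    (hx : x ∈ Ioo m M) (hmM : Ioo m M ⊆ V) (hm : m ∉ V) (hM : M ∉ V) :
    connectedComponentIn (V ×ˢ {c}) (x, c) = Ioo m M ×ˢ {c} := by
  refine Subset.antisymm ?_ ?_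
  · have hsplit : V ×ˢ {c} ⊆ Prod.fst ⁻¹' Ioo m M ∪ Prod.fst ⁻¹' (Icc m M)ᶜ := by
      rintro ⟨z, y⟩ ⟨hz, -⟩
      simp only [mem_union, mem_preimage]
      by_cases hzI : z ∈ Icc m M
      · left
        exact ⟨hzI.1.lt_of_ne fun h => hm (h ▸ hz), hzI.2.lt_of_ne fun h => hM (h ▸ hz)⟩
      · exact Or.inr hzI
    have hsub := isPreconnected_connectedComponentIn.subset_left_of_subset_union
      (isOpen_Ioo.preimage continuous_fst)
      (isOpen_compl_iff.2 isClosed_Icc |>.preimage continuous_fst)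
      (disjoint_compl_right.mono_right (compl_subset_compl.2 Ioo_subset_Icc_self) |>.preimage _)
      ((connectedComponentIn_subset _ _).trans hsplit)
      ⟨(x, c), mem_connectedComponentIn ⟨hmM hx, rfl⟩, hx⟩
    exact fun p hp => ⟨hsub hp, (connectedComponentIn_subset _ _ hp).2⟩
  · exact (isPreconnected_Ioo.prod isPreconnected_singleton).subset_connectedComponentIn
      ⟨hx, rfl⟩ (prod_mono hmM subset_rfl)

section HasSeparatedComponents

variable {V : Set ℝ}

theorem HasSeparatedComponents.exists_connectedComponentIn_eq (hV : HasSeparatedComponents V)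
    {c : ℝ} {p : ℝ × ℝ} (hp : p ∈ V ×ˢ {c}) :
    ∃ m M O, m < M ∧ IsOpen O ∧ Icc m M ⊆ O ∧ O ∩ V = Ioo m M ∧
      connectedComponentIn (V ×ˢ {c}) p = Ioo m M ×ˢ {c} := by
  obtain ⟨x, y⟩ := p
  obtain ⟨hx, hy : y = c⟩ := hp
  subst y
  obtain ⟨m, M, O, hxI, hO, hIO, hOV⟩ := hV x hx
  have hnot : ∀ z ∈ Icc m M \ Ioo m M, z ∉ V := fun z hz hzV =>
    hz.2 (hOV ▸ ⟨hIO hz.1, hzV⟩)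
  refine ⟨m, M, O, hxI.1.trans hxI.2, hO, hIO, hOV,
    connectedComponentIn_prod_singleton c hxI (hOV ▸ inter_subset_right) ?_ ?_⟩
  · exact hnot m ⟨left_mem_Icc.2 (hxI.1.trans hxI.2).le, fun h => lt_irrefl _ h.1⟩
  · exact hnot M ⟨right_mem_Icc.2 (hxI.1.trans hxI.2).le, fun h => lt_irrefl _ h.2⟩

theorem HasSeparatedComponents.isBounded_connectedComponentIn (hV : HasSeparatedComponents V)
    {c : ℝ} {p : ℝ × ℝ} (hp : p ∈ V ×ˢ {c}) :
    Bornology.IsBounded (connectedComponentIn (V ×ˢ {c}) p) := by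
  obtain ⟨m, M, _, -, -, -, -, h⟩ := hV.exists_connectedComponentIn_eq hp
  rw [h]
  exact Metric.isBounded_Ioo m M |>.prod Bornology.isBounded_singleton

theorem HasSeparatedComponents.closure_connectedComponentIn_inter
    (hV : HasSeparatedComponents V) {c : ℝ} {p q : ℝ × ℝ} (hp : p ∈ V ×ˢ {c})
    (hq : q ∈ V ×ˢ {c})
    (hne : connectedComponentIn (V ×ˢ {c}) p ≠ connectedComponentIn (V ×ˢ {c}) q) :
    closure (connectedComponentIn (V ×ˢ {c}) p) ∩
      closure (connectedComponentIn (V ×ˢ {c}) q) = ∅ := by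
  obtain ⟨m, M, O, hmM, hO, hIO, hOV, hp'⟩ := hV.exists_connectedComponentIn_eq hp
  obtain ⟨m', M', _, hmM', -, -, hOV', hq'⟩ := hV.exists_connectedComponentIn_eq hq
  have hIoo : ∀ {z}, z ∈ Ioo m' M' → z ∈ O → z ∈ Ioo m M := by
    intro z hz hzO
    rw [← hOV', mem_inter_iff] at hz
    rw [← hOV]
    exact ⟨hzO, hz.2⟩
  rw [eq_empty_iff_forall_notMem]
  rintro w ⟨hwp, hwq⟩
  rw [hp', closure_prod_eq, closure_Ioo hmM.ne] at hwp
  rw [hq', closure_prod_eq] at hwq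
  -- `O` is a neighbourhood of `w.1 ∈ closure (Ioo m' M')`, so the two intervals meet
  obtain ⟨z, hzO, hz⟩ := mem_closure_iff.1 hwq.1 O hO (hIO hwp.1)
  have hzp : (z, c) ∈ connectedComponentIn (V ×ˢ {c}) p := hp' ▸ ⟨hIoo hz hzO, rfl⟩
  have hzq : (z, c) ∈ connectedComponentIn (V ×ˢ {c}) q := hq' ▸ ⟨hz, rfl⟩
  exact hne ((connectedComponentIn_eq hzp).trans (connectedComponentIn_eq hzq).symm)

end HasSeparatedComponents

section FiberwiseInverse

variable {Y : Type*} [TopologicalSpace Y] {A B O : Set (ℝ × Y)} {K : Set Y}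
  {f g : ℝ × Y → ℝ × Y}

theorem continuousOn_of_invOn_of_strictMonoOn_fiber (hf : ContinuousOn f A) (hO : IsOpen O)
    (hA : A = O ∩ univ ×ˢ K) (hgf : InvOn g f A B) (hg : MapsTo g B A)
    (hsnd : ∀ p, (f p).2 = p.2)
    (hmono : ∀ y, StrictMonoOn (fun x => (f (x, y)).1) {x | (x, y) ∈ A}) :
    ContinuousOn g B := by
  intro q₀ hq₀
  set p₀ := g q₀
  have hp₀ : p₀ ∈ A := hg hq₀
  have hgsnd : ∀ q ∈ B, (g q).2 = q.2 := fun q hq => by rw [← hsnd, hgf.2 hq]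
  have hsnd₀ : Tendsto (fun q => q.2) (𝓝[B] q₀) (𝓝 p₀.2) := by
    rw [hgsnd q₀ hq₀]; exact continuous_snd.continuousWithinAt
  obtain ⟨u, hu, v, hv, huv⟩ := mem_nhds_prod_iff.1 (hO.mem_nhds (hA.subset hp₀).1)
  have hxA : ∀ x ∈ u, ∀ᶠ q in 𝓝[B] q₀, (x, q.2) ∈ A := fun x hx => by
    filter_upwards [hsnd₀ hv, self_mem_nhdsWithin] with q hqv hqB
    rw [hA, ← hgsnd q hqB]
    exact ⟨huv ⟨hx, hgsnd q hqB ▸ hqv⟩, trivial, (hA.subset (hg hqB)).2.2⟩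
  have hxA₀ : ∀ x ∈ u, (x, p₀.2) ∈ A := fun x hx => by
    rw [hA]; exact ⟨huv ⟨hx, mem_of_mem_nhds hv⟩, trivial, (hA.subset hp₀).2.2⟩
  have hfib : ∀ x ∈ u,
      Tendsto (fun q => (f (x, q.2)).1) (𝓝[B] q₀) (𝓝 (f (x, p₀.2)).1) := fun x hx =>
    (continuous_fst.tendsto _).comp <| (hf _ (hxA₀ x hx)).tendsto.comp <|
      tendsto_nhdsWithin_iff.2 ⟨tendsto_const_nhds.prodMk_nhds hsnd₀, hxA x hx⟩
  -- comparing `g q` with `x` amounts to comparing `q` with `f (x, q.2)`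
  have hcmp : ∀ x ∈ u, ∀ᶠ q in 𝓝[B] q₀,
      (x < (g q).1 ↔ (f (x, q.2)).1 < q.1) ∧ ((g q).1 < x ↔ q.1 < (f (x, q.2)).1) := by
    intro x hx
    filter_upwards [hxA x hx, self_mem_nhdsWithin] with q hqA hqB
    have hgq : ((g q).1, q.2) ∈ A := hgsnd q hqB ▸ hg hqB
    have hfgq : (f ((g q).1, q.2)).1 = q.1 := by rw [← hgsnd q hqB, hgf.2 hqB]
    rw [← hfgq]
    exact ⟨((hmono q.2).lt_iff_lt hqA hgq).symm, ((hmono q.2).lt_iff_lt hgq hqA).symm⟩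
  have hfst₀ : Tendsto (fun q => q.1) (𝓝[B] q₀) (𝓝 (f p₀).1) := by
    rw [hgf.2 hq₀]; exact continuous_fst.continuousWithinAt
  have hfst : Tendsto (fun q => (g q).1) (𝓝[B] q₀) (𝓝 p₀.1) := by
    refine tendsto_order.2 ⟨fun a ha => ?_, fun b hb => ?_⟩
    · have hx : ∀ᶠ x in 𝓝[<] p₀.1, x ∈ u ∩ Ioi a :=
        nhdsWithin_le_nhds (inter_mem hu (Ioi_mem_nhds ha))
      obtain ⟨x, ⟨hxu, hax⟩, hxp : x < p₀.1⟩ := (hx.and self_mem_nhdsWithin).exists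
      have hlt : (f (x, p₀.2)).1 < (f p₀).1 := hmono p₀.2 (hxA₀ x hxu) hp₀ hxp
      filter_upwards [hcmp x hxu, (hfib x hxu).eventually_lt hfst₀ hlt] with q hq hq'
      exact hax.trans (hq.1.2 hq')
    · have hx : ∀ᶠ x in 𝓝[>] p₀.1, x ∈ u ∩ Iio b :=
        nhdsWithin_le_nhds (inter_mem hu (Iio_mem_nhds hb))
      obtain ⟨x, ⟨hxu, hxb⟩, hxp : p₀.1 < x⟩ := (hx.and self_mem_nhdsWithin).exists
      have hlt : (f p₀).1 < (f (x, p₀.2)).1 := hmono p₀.2 hp₀ (hxA₀ x hxu) hxp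
      filter_upwards [hcmp x hxu, hfst₀.eventually_lt (hfib x hxu) hlt] with q hq hq'
      exact (hq.2.2 hq').trans hxb
  exact hfst.prodMk_nhds <| hsnd₀.congr' <| eventually_nhdsWithin_of_forall fun q hq =>
    (hgsnd q hq).symm

end FiberwiseInverse

section FiberwiseMaps

variable {f : ℝ × ℝ → ℝ} {U V : Set ℝ}

theorem strictMonoOn_fiber_halfStripOf
    (hlow : ∀ y ∈ Ico (0:ℝ) 1, StrictMono fun x => f (x, y))
    (htop : StrictMonoOn (fun x => f (x, 1)) V) (y : ℝ) :
    StrictMonoOn (fun x => f (x, y)) {x | (x, y) ∈ halfStripOf V} := by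
  by_cases hy : y ∈ Ico 0 1
  · exact (hlow y hy).strictMonoOn _
  · have hfib : {x | (x, y) ∈ halfStripOf V} ⊆ V := fun x hx =>
      hx.elim (fun h => absurd h.2 hy) (fun h => h.1)
    intro x₁ hx₁ x₂ hx₂ hlt
    obtain rfl : y = 1 := hx₁.elim (fun h => absurd h.2 hy) (fun h => h.2)
    exact htop (hfib hx₁) (hfib hx₂) hlt

theorem bijOn_halfStripOf
    (hlow : ∀ y ∈ Ico (0:ℝ) 1, StrictMono (fun x => f (x, y)) ∧ Surjective (fun x => f (x, y)))
    (htop : StrictMonoOn (fun x => f (x, 1)) V) (hmaps : MapsTo (fun x => f (x, 1)) V U)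
    (hsurj : SurjOn (fun x => f (x, 1)) V U) :
    BijOn (fun p => (f p, p.2)) (halfStripOf V) (halfStripOf U) := by
  refine ⟨?_, ?_, ?_⟩
  · rintro ⟨x, y⟩ (⟨-, hy⟩ | ⟨hx, rfl : y = 1⟩)
    · exact Or.inl ⟨trivial, hy⟩
    · exact Or.inr ⟨hmaps hx, rfl⟩
  · rintro ⟨x₁, y₁⟩ hp ⟨x₂, y₂⟩ hq h
    obtain ⟨h1, rfl : y₁ = y₂⟩ := Prod.ext_iff.1 h
    rw [(strictMonoOn_fiber_halfStripOf (fun y hy => (hlow y hy).1) htop y₁).injOn hp hq h1]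
  · rintro ⟨x, y⟩ (⟨-, hy⟩ | ⟨hx, rfl : y = 1⟩)
    · obtain ⟨x', hx'⟩ := (hlow y hy).2 x
      exact ⟨(x', y), Or.inl ⟨trivial, hy⟩, Prod.ext hx' rfl⟩
    · obtain ⟨x', hx', hfx'⟩ := hsurj hx
      exact ⟨(x', 1), Or.inr ⟨hx', rfl⟩, Prod.ext hfx' rfl⟩

theorem exists_homeomorph_halfStripOf (hV : IsOpen V)
    (hlow : ∀ y ∈ Ico (0:ℝ) 1, StrictMono (fun x => f (x, y)) ∧ Surjective (fun x => f (x, y)))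
    (htop : StrictMonoOn (fun x => f (x, 1)) V) (hmaps : MapsTo (fun x => f (x, 1)) V U)
    (hsurj : SurjOn (fun x => f (x, 1)) V U) (hf : ContinuousOn f (halfStripOf V))
    (hf₀ : ∀ x, f (x, 0) = x) :
    ∃ h : ℝ × ℝ → ℝ × ℝ, BijOn h (halfStripOf U) (halfStripOf V) ∧
      ContinuousOn h (halfStripOf U) ∧
      (∃ g : ℝ × ℝ → ℝ × ℝ,
        InvOn g h (halfStripOf U) (halfStripOf V) ∧ ContinuousOn g (halfStripOf V)) ∧
      (∀ x : ℝ, h (x, 0) = (x, 0)) ∧ ∀ p ∈ halfStripOf U, (h p).2 = p.2 := by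
  set k : ℝ × ℝ → ℝ × ℝ := fun p => (f p, p.2)
  have hk : BijOn k (halfStripOf V) (halfStripOf U) := bijOn_halfStripOf hlow htop hmaps hsurj
  have hkc : ContinuousOn k (halfStripOf V) := hf.prodMk continuous_snd.continuousOn
  set h := invFunOn k (halfStripOf V)
  have hinv : InvOn h k (halfStripOf V) (halfStripOf U) := hk.invOn_invFunOn
  have hh : MapsTo h (halfStripOf U) (halfStripOf V) := hk.surjOn.mapsTo_invFunOn
  obtain ⟨-, -, O, hO, hVO⟩ := isHalfStrip_halfStripOf hV
  refine ⟨h, hinv.symm.bijOn hh hk.mapsTo,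
    continuousOn_of_invOn_of_strictMonoOn_fiber hkc hO hVO hinv hh (fun _ => rfl)
      (strictMonoOn_fiber_halfStripOf (fun y hy => (hlow y hy).1) htop),
    ⟨k, hinv.symm, hkc⟩, fun x => ?_, fun p hp => ?_⟩
  · have hk0 : k (x, 0) = (x, 0) := Prod.ext (hf₀ x) rfl
    conv_lhs => rw [← hk0]
    exact hinv.1 (Or.inl ⟨trivial, left_mem_Ico.2 zero_lt_one⟩)
  · calc (h p).2 = (k (h p)).2 := rfl
      _ = p.2 := by rw [hinv.2 hp]

end FiberwiseMaps

section Components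

variable {W : Set ℝ} {x z : ℝ}

/-- For `W` open and bounded and `x ∈ W`, the component of `W` containing `x` is
`Ioo (lowerEnd W x) (upperEnd W x)`. -/
noncomputable def lowerEnd (W : Set ℝ) (x : ℝ) : ℝ := sSup (Wᶜ ∩ Iic x)

noncomputable def upperEnd (W : Set ℝ) (x : ℝ) : ℝ := sInf (Wᶜ ∩ Ici x)

theorem le_lowerEnd (hz : z ∉ W) (hzx : z ≤ x) : z ≤ lowerEnd W x :=
  le_csSup ⟨x, fun _ h => h.2⟩ ⟨hz, hzx⟩

theorem upperEnd_le (hz : z ∉ W) (hxz : x ≤ z) : upperEnd W x ≤ z :=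
  csInf_le ⟨x, fun _ h => h.2⟩ ⟨hz, hxz⟩

theorem lowerEnd_mem (hW : IsOpen W) (hWb : Bornology.IsBounded W) (hx : x ∈ W) :
    lowerEnd W x ∈ Wᶜ ∩ Iic x := by
  obtain ⟨c, hc⟩ := hWb.bddBelow
  have hc' : c - 1 ∉ W := fun h => by linarith [hc h]
  exact (hW.isClosed_compl.inter isClosed_Iic).csSup_mem
    ⟨c - 1, hc', mem_Iic.2 (by linarith [hc hx])⟩ ⟨x, fun _ h => h.2⟩

theorem upperEnd_mem (hW : IsOpen W) (hWb : Bornology.IsBounded W) (hx : x ∈ W) :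
    upperEnd W x ∈ Wᶜ ∩ Ici x := by
  obtain ⟨c, hc⟩ := hWb.bddAbove
  have hc' : c + 1 ∉ W := fun h => by linarith [hc h]
  exact (hW.isClosed_compl.inter isClosed_Ici).csInf_mem
    ⟨c + 1, hc', mem_Ici.2 (by linarith [hc hx])⟩ ⟨x, fun _ h => h.2⟩

theorem lowerEnd_lt (hW : IsOpen W) (hWb : Bornology.IsBounded W) (hx : x ∈ W) :
    lowerEnd W x < x :=
  (lowerEnd_mem hW hWb hx).2.lt_of_ne fun h => (lowerEnd_mem hW hWb hx).1 (by rwa [h])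

theorem lt_upperEnd (hW : IsOpen W) (hWb : Bornology.IsBounded W) (hx : x ∈ W) :
    x < upperEnd W x :=
  (upperEnd_mem hW hWb hx).2.lt_of_ne' fun h => (upperEnd_mem hW hWb hx).1 (by rwa [h])

theorem Ioo_lowerEnd_upperEnd_subset (W : Set ℝ) (x : ℝ) :
    Ioo (lowerEnd W x) (upperEnd W x) ⊆ W := by
  intro z hz
  by_contra hzW
  rcases le_total z x with h | h
  · exact (le_lowerEnd hzW h).not_gt hz.1
  · exact (upperEnd_le hzW h).not_gt hz.2

theorem lowerEnd_eq_and_upperEnd_eq (hW : IsOpen W) (hWb : Bornology.IsBounded W) (hx : x ∈ W)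
    (hz : z ∈ Ioo (lowerEnd W x) (upperEnd W x)) :
    lowerEnd W z = lowerEnd W x ∧ upperEnd W z = upperEnd W x := by
  have hzW := Ioo_lowerEnd_upperEnd_subset W x hz
  have ha := lowerEnd_mem hW hWb hx
  have hb := upperEnd_mem hW hWb hx
  have ha' := lowerEnd_mem hW hWb hzW
  have hb' := upperEnd_mem hW hWb hzW
  refine ⟨le_antisymm ?_ (le_lowerEnd ha.1 hz.1.le), le_antisymm (upperEnd_le hb.1 hz.2.le) ?_⟩
  · by_contra! h
    exact ha'.1 (Ioo_lowerEnd_upperEnd_subset W x ⟨h, ha'.2.trans_lt hz.2⟩)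
  · by_contra! h
    exact hb'.1 (Ioo_lowerEnd_upperEnd_subset W x ⟨hz.1.trans_le hb'.2, h⟩)

end Components

section StretchProfile

variable {y v : ℝ}

/-- For `0 ≤ y < 1` a piecewise linear homeomorphism of `[0, 1]`; for `y = 1` it maps
`[1/4, 3/4]` affinely onto `[0, 1]` and collapses the rest. The pieces are the lines of slope
`1 - y` through `(0, 0)` and `(1, 1)` and the line of slope `1 + y` through `(1/2, 1/2)`. -/
noncomputable def stretchProfile (y v : ℝ) : ℝ :=
  min (max (v * (1 - y)) (v * (1 + y) - y / 2)) (1 - (1 - v) * (1 - y))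

theorem continuous_stretchProfile : Continuous fun q : ℝ × ℝ => stretchProfile q.1 q.2 := by
  unfold stretchProfile; fun_prop

theorem stretchProfile_zero_left (v : ℝ) : stretchProfile 0 v = v := by
  simp [stretchProfile]

theorem stretchProfile_zero_right (hy : 0 ≤ y) : stretchProfile y 0 = 0 := by
  rw [stretchProfile, max_eq_left (by linarith), min_eq_left (by linarith)]; ring

theorem stretchProfile_one_right (hy : 0 ≤ y) : stretchProfile y 1 = 1 := by
  rw [stretchProfile, max_eq_right (by linarith), min_eq_right (by linarith)]; ring

theorem stretchProfile_one_left (hv : v ∈ Icc (1 / 4 : ℝ) (3 / 4)) :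
    stretchProfile 1 v = 2 * v - 1 / 2 := by
  rw [stretchProfile, max_eq_right (by linarith [hv.1]), min_eq_left (by linarith [hv.2])]; ring

theorem stretchProfile_strictMono (hy : y ∈ Ico (0 : ℝ) 1) : StrictMono (stretchProfile y) := by
  intro v₁ v₂ h
  have h1 : 0 < 1 - y := by linarith [hy.2]
  exact min_lt_min (max_lt_max (by nlinarith) (by nlinarith [hy.1])) (by nlinarith)

theorem abs_stretchProfile_sub_le (hy : y ∈ Icc (0 : ℝ) 1) (hv : v ∈ Icc (0 : ℝ) 1) :
    |stretchProfile y v - v| ≤ min v (1 - v) := by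
  obtain ⟨hy0, hy1⟩ := hy
  obtain ⟨hv0, hv1⟩ := hv
  have hy' : 0 ≤ 1 - y := by linarith
  have hv' : 0 ≤ 1 - v := by linarith
  have h0 : 0 ≤ stretchProfile y v :=
    le_min (le_max_of_le_left (mul_nonneg hv0 hy')) (by nlinarith [mul_nonneg hv' hy0])
  have h1 : 2 * v - 1 ≤ stretchProfile y v :=
    le_min (le_max_of_le_right (by nlinarith [mul_nonneg hv' hy']))
      (by nlinarith [mul_nonneg hv' hy0])
  have h2 : stretchProfile y v ≤ 2 * v :=
    min_le_of_left_le (max_le (by nlinarith [mul_nonneg hv0 hy0])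
      (by nlinarith [mul_nonneg hv0 hy']))
  have h3 : stretchProfile y v ≤ 1 := min_le_of_right_le (by nlinarith [mul_nonneg hv' hy'])
  rw [abs_le]
  refine ⟨?_, le_min (by linarith) (by linarith)⟩
  rcases le_total v (1 - v) with h | h
  · rw [min_eq_left h]; linarith
  · rw [min_eq_right h]; linarith

end StretchProfile

section StretchMap

variable {W : Set ℝ} {x y z : ℝ}

noncomputable def componentCoord (W : Set ℝ) (x : ℝ) : ℝ :=
  (x - lowerEnd W x) / (upperEnd W x - lowerEnd W x)

open Classical in
noncomputable def stretchMap (W : Set ℝ) (p : ℝ × ℝ) : ℝ :=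
  if p.1 ∈ W then
    lowerEnd W p.1 + (upperEnd W p.1 - lowerEnd W p.1) * stretchProfile p.2 (componentCoord W p.1)
  else p.1

def middleHalves (W : Set ℝ) : Set ℝ := {x ∈ W | componentCoord W x ∈ Ioo (1 / 4) (3 / 4)}

theorem stretchMap_of_notMem (hx : x ∉ W) : stretchMap W (x, y) = x := if_neg hx

theorem componentCoord_eq (hW : IsOpen W) (hWb : Bornology.IsBounded W) (hx : x ∈ W)
    (hz : z ∈ Ioo (lowerEnd W x) (upperEnd W x)) :
    componentCoord W z = (z - lowerEnd W x) / (upperEnd W x - lowerEnd W x) := by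
  obtain ⟨ha, hb⟩ := lowerEnd_eq_and_upperEnd_eq hW hWb hx hz
  rw [componentCoord, ha, hb]

theorem componentCoord_mem_Ioo (hW : IsOpen W) (hWb : Bornology.IsBounded W) (hx : x ∈ W) :
    componentCoord W x ∈ Ioo 0 1 := by
  have ha := lowerEnd_lt hW hWb hx
  have hb := lt_upperEnd hW hWb hx
  rw [componentCoord, mem_Ioo, div_pos_iff_of_pos_right (by linarith), div_lt_one (by linarith)]
  constructor <;> linarith

theorem stretchMap_eq (hW : IsOpen W) (hWb : Bornology.IsBounded W) (hx : x ∈ W)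
    (hz : z ∈ Ioo (lowerEnd W x) (upperEnd W x)) (y : ℝ) :
    stretchMap W (z, y) = lowerEnd W x + (upperEnd W x - lowerEnd W x) *
      stretchProfile y ((z - lowerEnd W x) / (upperEnd W x - lowerEnd W x)) := by
  obtain ⟨ha, hb⟩ := lowerEnd_eq_and_upperEnd_eq hW hWb hx hz
  rw [stretchMap, if_pos (Ioo_lowerEnd_upperEnd_subset W x hz), componentCoord_eq hW hWb hx hz,
    ha, hb]

theorem stretchMap_zero (hW : IsOpen W) (hWb : Bornology.IsBounded W) (x : ℝ) :
    stretchMap W (x, 0) = x := by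
  by_cases hx : x ∈ W
  · have hab : upperEnd W x - lowerEnd W x ≠ 0 := by
      linarith [lowerEnd_lt hW hWb hx, lt_upperEnd hW hWb hx]
    rw [stretchMap_eq hW hWb hx ⟨lowerEnd_lt hW hWb hx, lt_upperEnd hW hWb hx⟩,
      stretchProfile_zero_left]
    field_simp
    ring
  · exact stretchMap_of_notMem hx

theorem stretchMap_mem_Ioo (hW : IsOpen W) (hWb : Bornology.IsBounded W) (hx : x ∈ W)
    (h : stretchProfile y (componentCoord W x) ∈ Ioo 0 1) :
    stretchMap W (x, y) ∈ Ioo (lowerEnd W x) (upperEnd W x) := by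
  have hab : 0 < upperEnd W x - lowerEnd W x := by
    linarith [lowerEnd_lt hW hWb hx, lt_upperEnd hW hWb hx]
  rw [stretchMap, if_pos hx]
  constructor <;> nlinarith [h.1, h.2]

theorem abs_stretchMap_sub_le (hW : IsOpen W) (hWb : Bornology.IsBounded W)
    (hy : y ∈ Icc (0 : ℝ) 1) (hz : z ∉ W) : |stretchMap W (x, y) - x| ≤ |x - z| := by
  by_cases hx : x ∈ W
  · have ha := lowerEnd_lt hW hWb hx
    have hb := lt_upperEnd hW hWb hx
    have hv := abs_stretchProfile_sub_le hy
      (Ioo_subset_Icc_self (componentCoord_mem_Ioo hW hWb hx))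
    rw [componentCoord] at hv
    set a := lowerEnd W x
    set b := upperEnd W x
    set v := (x - a) / (b - a)
    have hba : 0 < b - a := by linarith
    have hxv : x = a + (b - a) * v := by simp only [v]; field_simp; ring
    have hS : stretchMap W (x, y) = a + (b - a) * stretchProfile y v := by
      rw [stretchMap, if_pos hx]; rfl
    -- `z` lies outside the component `(a, b)` of `x`
    have hgap : min (x - a) (b - x) ≤ |x - z| := by
      rcases le_total z x with h | h
      · exact (min_le_left _ _).trans
          ((sub_le_sub_left (le_lowerEnd hz h) x).trans (le_abs_self _))
      · exact (min_le_right _ _).trans ((sub_le_sub_right (upperEnd_le hz h) x).trans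
          (by rw [abs_sub_comm]; exact le_abs_self _))
    calc |stretchMap W (x, y) - x| = (b - a) * |stretchProfile y v - v| := by
          rw [hS, ← abs_of_pos hba, ← abs_mul, abs_of_pos hba]
          congr 1
          linear_combination -hxv
      _ ≤ (b - a) * min v (1 - v) := mul_le_mul_of_nonneg_left hv (by linarith)
      _ = min (x - a) (b - x) := by
          rw [mul_min_of_nonneg _ _ (by linarith)]
          congr 1 <;> linarith
      _ ≤ |x - z| := hgap
  · rw [stretchMap_of_notMem hx, sub_self, abs_zero]
    exact abs_nonneg _

theorem continuousOn_stretchMap (hW : IsOpen W) (hWb : Bornology.IsBounded W) :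
    ContinuousOn (stretchMap W) (univ ×ˢ Icc 0 1) := by
  rintro ⟨x, y⟩ ⟨-, hy⟩
  by_cases hx : x ∈ W
  · set a := lowerEnd W x
    set b := upperEnd W x
    have hformula : stretchMap W =ᶠ[𝓝 (x, y)]
        fun p => a + (b - a) * stretchProfile p.2 ((p.1 - a) / (b - a)) := by
      filter_upwards [(isOpen_Ioo.prod isOpen_univ).mem_nhds
        ⟨⟨lowerEnd_lt hW hWb hx, lt_upperEnd hW hWb hx⟩, mem_univ y⟩] with p hp
      exact stretchMap_eq hW hWb hx hp.1 p.2
    refine (ContinuousAt.congr ?_ hformula.symm).continuousWithinAt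
    exact (continuous_const.add (continuous_const.mul (continuous_stretchProfile.comp
      (continuous_snd.prodMk ((continuous_fst.sub continuous_const).div_const _))))).continuousAt
  · -- `stretchMap W` moves `p` by at most `|p.1 - x|`
    have hsmall :
        Tendsto (fun p => stretchMap W p - p.1) (𝓝[univ ×ˢ Icc 0 1] (x, y)) (𝓝 0) := by
      refine squeeze_zero_norm' (a := fun p : ℝ × ℝ => |p.1 - x|)
        (eventually_nhdsWithin_of_forall fun p hp => abs_stretchMap_sub_le hW hWb hp.2 hx)
        (tendsto_nhdsWithin_of_tendsto_nhds ?_)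
      simpa using ((continuous_fst.sub (continuous_const (y := x))).abs.tendsto (x, y) :)
    rw [ContinuousWithinAt, stretchMap_of_notMem hx]
    simpa using
      hsmall.add (continuous_fst.continuousWithinAt (s := univ ×ˢ Icc 0 1) (x := (x, y)))

theorem strictMonoOn_stretchMap (hW : IsOpen W) (hWb : Bornology.IsBounded W) {P E : Set ℝ}
    (hP : StrictMonoOn (stretchProfile y) P) (hPI : MapsTo (stretchProfile y) P (Ioo 0 1))
    (hE : ∀ x ∈ E, x ∈ W → componentCoord W x ∈ P) :
    StrictMonoOn (fun x => stretchMap W (x, y)) E := by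
  have hmem : ∀ x ∈ E, x ∈ W → stretchMap W (x, y) ∈ Ioo (lowerEnd W x) (upperEnd W x) :=
    fun x hxE hxW => stretchMap_mem_Ioo hW hWb hxW (hPI (hE x hxE hxW))
  intro x₁ hx₁ x₂ hx₂ hlt
  by_cases h₁ : x₁ ∈ W <;> by_cases h₂ : x₂ ∈ W
  · have ha := lowerEnd_lt hW hWb h₁
    rcases lt_or_ge x₂ (upperEnd W x₁) with hc | hc
    · have hI₁ : x₁ ∈ Ioo (lowerEnd W x₁) (upperEnd W x₁) := ⟨ha, hlt.trans hc⟩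
      have hI₂ : x₂ ∈ Ioo (lowerEnd W x₁) (upperEnd W x₁) := ⟨ha.trans hlt, hc⟩
      have hba : 0 < upperEnd W x₁ - lowerEnd W x₁ := by linarith
      have hPlt := hP (componentCoord_eq hW hWb h₁ hI₁ ▸ hE x₁ hx₁ h₁)
        (componentCoord_eq hW hWb h₁ hI₂ ▸ hE x₂ hx₂ h₂)
        (div_lt_div_of_pos_right (sub_lt_sub_right hlt _) hba)
      simp only [stretchMap_eq hW hWb h₁ hI₁, stretchMap_eq hW hWb h₁ hI₂]
      exact add_lt_add_right (mul_lt_mul_of_pos_left hPlt hba) _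
    · calc stretchMap W (x₁, y) < upperEnd W x₁ := (hmem x₁ hx₁ h₁).2
        _ ≤ lowerEnd W x₂ := le_lowerEnd (upperEnd_mem hW hWb h₁).1 hc
        _ < stretchMap W (x₂, y) := (hmem x₂ hx₂ h₂).1
  · simp only [stretchMap_of_notMem h₂]
    exact (hmem x₁ hx₁ h₁).2.trans_le (upperEnd_le h₂ hlt.le)
  · simp only [stretchMap_of_notMem h₁]
    exact (le_lowerEnd h₁ hlt.le).trans_lt (hmem x₂ hx₂ h₂).1
  · simpa only [stretchMap_of_notMem h₁, stretchMap_of_notMem h₂] using hlt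

theorem strictMono_stretchMap (hW : IsOpen W) (hWb : Bornology.IsBounded W)
    (hy : y ∈ Ico (0 : ℝ) 1) : StrictMono fun x => stretchMap W (x, y) := by
  have hmono := stretchProfile_strictMono hy
  refine strictMonoOn_univ.1 (strictMonoOn_stretchMap hW hWb (hmono.strictMonoOn (Ioo 0 1))
    (fun v hv => ?_) fun x _ hx => componentCoord_mem_Ioo hW hWb hx)
  have h := hmono.lt_iff_lt.2 hv.1
  have h' := hmono.lt_iff_lt.2 hv.2
  rw [stretchProfile_zero_right hy.1] at h
  rw [stretchProfile_one_right hy.1] at h'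
  exact ⟨h, h'⟩

theorem continuousOn_stretchMap_fiber (hW : IsOpen W) (hWb : Bornology.IsBounded W)
    (hy : y ∈ Icc (0 : ℝ) 1) (s : Set ℝ) : ContinuousOn (fun x => stretchMap W (x, y)) s :=
  (continuousOn_stretchMap hW hWb).comp (continuous_id.prodMk continuous_const).continuousOn
    fun _ _ => ⟨trivial, hy⟩

theorem surjective_stretchMap (hW : IsOpen W) (hWb : Bornology.IsBounded W)
    (hy : y ∈ Icc (0 : ℝ) 1) : Surjective fun x => stretchMap W (x, y) := by
  intro t
  by_cases ht : t ∈ W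
  · have ha := lowerEnd_mem hW hWb ht
    have hb := upperEnd_mem hW hWb ht
    obtain ⟨x, -, hx⟩ := intermediate_value_Icc (ha.2.trans hb.2)
      (continuousOn_stretchMap_fiber hW hWb hy _)
      ⟨(stretchMap_of_notMem ha.1).trans_le ha.2, hb.2.trans (stretchMap_of_notMem hb.1).ge⟩
    exact ⟨x, hx⟩
  · exact ⟨t, stretchMap_of_notMem ht⟩

end StretchMap

section MiddleHalves

variable {W : Set ℝ} {x : ℝ}

theorem Ioo_inter_middleHalves (hW : IsOpen W) (hWb : Bornology.IsBounded W) (hx : x ∈ W) :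
    Ioo (lowerEnd W x) (upperEnd W x) ∩ middleHalves W =
      Ioo (lowerEnd W x + (upperEnd W x - lowerEnd W x) / 4)
        (lowerEnd W x + 3 * (upperEnd W x - lowerEnd W x) / 4) := by
  have hba : 0 < upperEnd W x - lowerEnd W x := by
    linarith [lowerEnd_lt hW hWb hx, lt_upperEnd hW hWb hx]
  ext z
  constructor
  · rintro ⟨hz, -, hzc⟩
    rw [componentCoord_eq hW hWb hx hz, mem_Ioo, lt_div_iff₀ hba, div_lt_iff₀ hba] at hzc
    constructor <;> linarith [hzc.1, hzc.2]
  · intro hz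
    have hzI : z ∈ Ioo (lowerEnd W x) (upperEnd W x) :=
      ⟨by linarith [hz.1], by linarith [hz.2]⟩
    refine ⟨hzI, Ioo_lowerEnd_upperEnd_subset W x hzI, ?_⟩
    rw [componentCoord_eq hW hWb hx hzI, mem_Ioo, lt_div_iff₀ hba, div_lt_iff₀ hba]
    constructor <;> linarith [hz.1, hz.2]

theorem middleHalves_subset (W : Set ℝ) : middleHalves W ⊆ W := sep_subset _ _

theorem isOpen_middleHalves (hW : IsOpen W) (hWb : Bornology.IsBounded W) :
    IsOpen (middleHalves W) := by
  refine isOpen_iff_forall_mem_open.2 fun x hx => ?_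
  have hxW := middleHalves_subset W hx
  have hxI : x ∈ Ioo (lowerEnd W x) (upperEnd W x) :=
    ⟨lowerEnd_lt hW hWb hxW, lt_upperEnd hW hWb hxW⟩
  have h := Ioo_inter_middleHalves hW hWb hxW
  exact ⟨_, h ▸ inter_subset_right, isOpen_Ioo, h ▸ ⟨hxI, hx⟩⟩

theorem strictMonoOn_stretchMap_middleHalves (hW : IsOpen W) (hWb : Bornology.IsBounded W) :
    StrictMonoOn (fun x => stretchMap W (x, 1)) (middleHalves W) := by
  refine strictMonoOn_stretchMap hW hWb (P := Ioo (1 / 4) (3 / 4)) (fun v hv w hw hvw => ?_)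
    (fun v hv => ?_) fun x hx _ => hx.2
  · rw [stretchProfile_one_left (Ioo_subset_Icc_self hv),
      stretchProfile_one_left (Ioo_subset_Icc_self hw)]
    linarith
  · rw [stretchProfile_one_left (Ioo_subset_Icc_self hv)]
    constructor <;> linarith [hv.1, hv.2]

theorem mapsTo_stretchMap_middleHalves (hW : IsOpen W) (hWb : Bornology.IsBounded W) :
    MapsTo (fun x => stretchMap W (x, 1)) (middleHalves W) W := by
  intro x hx
  refine Ioo_lowerEnd_upperEnd_subset W x (stretchMap_mem_Ioo hW hWb hx.1 ?_)
  rw [stretchProfile_one_left (Ioo_subset_Icc_self hx.2)]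
  constructor <;> linarith [hx.2.1, hx.2.2]

theorem surjOn_stretchMap_middleHalves (hW : IsOpen W) (hWb : Bornology.IsBounded W) :
    SurjOn (fun x => stretchMap W (x, 1)) (middleHalves W) W := by
  intro t ht
  have ha := lowerEnd_lt hW hWb ht
  have hb := lt_upperEnd hW hWb ht
  have hba : 0 < upperEnd W t - lowerEnd W t := by linarith
  have hval : ∀ x ∈ Icc (lowerEnd W t + (upperEnd W t - lowerEnd W t) / 4)
      (lowerEnd W t + 3 * (upperEnd W t - lowerEnd W t) / 4),
      stretchMap W (x, 1) = 2 * x - (lowerEnd W t + upperEnd W t) / 2 := by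
    intro x hx
    have hxI : x ∈ Ioo (lowerEnd W t) (upperEnd W t) :=
      ⟨by linarith [hx.1], by linarith [hx.2]⟩
    rw [stretchMap_eq hW hWb ht hxI, stretchProfile_one_left]
    · field_simp; ring
    · rw [mem_Icc, le_div_iff₀ hba, div_le_iff₀ hba]
      constructor <;> linarith [hx.1, hx.2]
  have hmid := Ioo_inter_middleHalves hW hWb ht
  have hcont := continuousOn_stretchMap_fiber hW hWb ⟨zero_le_one, le_rfl⟩
    (Icc (lowerEnd W t + (upperEnd W t - lowerEnd W t) / 4)
      (lowerEnd W t + 3 * (upperEnd W t - lowerEnd W t) / 4))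
  generalize lowerEnd W t = a at *
  generalize upperEnd W t = b at *
  have hle : a + (b - a) / 4 ≤ a + 3 * (b - a) / 4 := by linarith
  obtain ⟨x, hx, hxt⟩ := intermediate_value_Icc hle hcont
    (show t ∈ Icc (stretchMap W (a + (b - a) / 4, 1))
        (stretchMap W (a + 3 * (b - a) / 4, 1)) by
      rw [hval _ (left_mem_Icc.2 hle), hval _ (right_mem_Icc.2 hle)]
      constructor <;> linarith)
  have hxI : x ∈ Ioo (a + (b - a) / 4) (a + 3 * (b - a) / 4) := by
    have := hval x hx
    simp only at hxt
    constructor <;> linarith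
  exact ⟨x, (hmid ▸ hxI : x ∈ Ioo a b ∩ middleHalves W).2, hxt⟩

theorem stretchMap_mem_Ioo_of_subset {c d y z : ℝ} (hW : IsOpen W)
    (hWI : W ⊆ Ioo c d) (hz : z ∈ Ioo c d) (hp : (z, y) ∈ halfStripOf (middleHalves W)) :
    stretchMap W (z, y) ∈ Ioo c d := by
  have hWb : Bornology.IsBounded W := (Metric.isBounded_Ioo c d).subset hWI
  rcases hp with ⟨-, hy⟩ | ⟨hz', rfl : y = 1⟩
  · have hmono := strictMono_stretchMap hW hWb hy
    have hc : c ∉ W := fun h => lt_irrefl c (hWI h).1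
    have hd : d ∉ W := fun h => lt_irrefl d (hWI h).2
    constructor
    · simpa only [stretchMap_of_notMem hc] using hmono hz.1
    · simpa only [stretchMap_of_notMem hd] using hmono hz.2
  · exact hWI (mapsTo_stretchMap_middleHalves hW hWb hz')

end MiddleHalves

section ArctanConjugation

variable {W : Set ℝ}

noncomputable def arctanStretch (W : Set ℝ) (p : ℝ × ℝ) : ℝ :=
  tan (stretchMap W (arctan p.1, p.2))

theorem arctanStretch_zero (hW : IsOpen W) (hWI : W ⊆ Ioo (-(π / 2)) (π / 2)) (x : ℝ) :
    arctanStretch W (x, 0) = x := by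
  rw [arctanStretch, stretchMap_zero hW ((Metric.isBounded_Ioo _ _).subset hWI), tan_arctan]

theorem continuousOn_arctanStretch (hW : IsOpen W) (hWI : W ⊆ Ioo (-(π / 2)) (π / 2)) :
    ContinuousOn (arctanStretch W) (halfStripOf (arctan ⁻¹' middleHalves W)) := by
  refine continuousOn_tan_Ioo.comp ((continuousOn_stretchMap hW
    ((Metric.isBounded_Ioo _ _).subset hWI)).comp (by fun_prop) fun p hp => ?_) fun p hp => ?_
  · exact ⟨trivial, ((halfStripOf_eq _).subset hp).2.2⟩
  · exact stretchMap_mem_Ioo_of_subset hW hWI (arctan_mem_Ioo _) hp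

theorem arctanStretch_fiber (hW : IsOpen W) (hWI : W ⊆ Ioo (-(π / 2)) (π / 2)) {y : ℝ}
    (hy : y ∈ Ico (0 : ℝ) 1) :
    StrictMono (fun x => arctanStretch W (x, y)) ∧
      Surjective (fun x => arctanStretch W (x, y)) := by
  have hWb : Bornology.IsBounded W := (Metric.isBounded_Ioo _ _).subset hWI
  have hmono := strictMono_stretchMap hW hWb hy
  have hI : ∀ z ∈ Ioo (-(π / 2)) (π / 2), stretchMap W (z, y) ∈ Ioo (-(π / 2)) (π / 2) :=
    fun z hz => stretchMap_mem_Ioo_of_subset hW hWI hz (Or.inl ⟨trivial, hy⟩)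
  refine ⟨fun x₁ x₂ h => strictMonoOn_tan (hI _ (arctan_mem_Ioo _)) (hI _ (arctan_mem_Ioo _))
    (hmono (arctan_strictMono h)), fun t => ?_⟩
  obtain ⟨z, hz⟩ := surjective_stretchMap hW hWb (Ico_subset_Icc_self hy) (arctan t)
  -- `stretchMap W (·, y)` fixes `± π/2`, so `z` lies in `(-π/2, π/2)`
  have hzI : z ∈ Ioo (-(π / 2)) (π / 2) := by
    have hc : stretchMap W (-(π / 2), y) = -(π / 2) :=
      stretchMap_of_notMem fun h => lt_irrefl _ (hWI h).1
    have hd : stretchMap W (π / 2, y) = π / 2 :=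
      stretchMap_of_notMem fun h => lt_irrefl _ (hWI h).2
    have h := arctan_mem_Ioo t
    rw [← hz] at h
    refine ⟨hmono.lt_iff_lt.1 ?_, hmono.lt_iff_lt.1 ?_⟩
    · simpa only [hc] using h.1
    · simpa only [hd] using h.2
  exact ⟨tan z, by simp only [arctanStretch, arctan_tan hzI.1 hzI.2, hz, tan_arctan]⟩

theorem strictMonoOn_arctanStretch_one (hW : IsOpen W) (hWI : W ⊆ Ioo (-(π / 2)) (π / 2)) :
    StrictMonoOn (fun x => arctanStretch W (x, 1)) (arctan ⁻¹' middleHalves W) := by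
  have hWb : Bornology.IsBounded W := (Metric.isBounded_Ioo _ _).subset hWI
  intro x₁ hx₁ x₂ hx₂ h
  exact strictMonoOn_tan (hWI (mapsTo_stretchMap_middleHalves hW hWb hx₁))
    (hWI (mapsTo_stretchMap_middleHalves hW hWb hx₂))
    (strictMonoOn_stretchMap_middleHalves hW hWb hx₁ hx₂ (arctan_strictMono h))

theorem mapsTo_arctanStretch_one (hW : IsOpen W) (hWI : W ⊆ Ioo (-(π / 2)) (π / 2)) :
    MapsTo (fun x => arctanStretch W (x, 1)) (arctan ⁻¹' middleHalves W) (arctan ⁻¹' W) := by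
  intro x hx
  have h := mapsTo_stretchMap_middleHalves hW ((Metric.isBounded_Ioo _ _).subset hWI) hx
  simpa only [mem_preimage, arctanStretch, arctan_tan (hWI h).1 (hWI h).2] using h

theorem surjOn_arctanStretch_one (hW : IsOpen W) (hWI : W ⊆ Ioo (-(π / 2)) (π / 2)) :
    SurjOn (fun x => arctanStretch W (x, 1)) (arctan ⁻¹' middleHalves W) (arctan ⁻¹' W) := by
  intro t ht
  obtain ⟨z, hz, hzt⟩ := surjOn_stretchMap_middleHalves hW
    ((Metric.isBounded_Ioo _ _).subset hWI) ht
  have hzI := hWI (middleHalves_subset W hz)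
  refine ⟨tan z, ?_, ?_⟩
  · rwa [mem_preimage, arctan_tan hzI.1 hzI.2]
  · simp only [arctanStretch, arctan_tan hzI.1 hzI.2] at hzt ⊢
    rw [hzt, tan_arctan]

theorem preimage_arctan_Ioo {m M : ℝ} (hm : m ∈ Ioo (-(π / 2)) (π / 2))
    (hM : M ∈ Ioo (-(π / 2)) (π / 2)) : arctan ⁻¹' Ioo m M = Ioo (tan m) (tan M) := by
  ext t
  conv_lhs => rw [← arctan_tan hm.1 hm.2, ← arctan_tan hM.1 hM.2]
  simp only [mem_preimage, mem_Ioo, arctan_lt_arctan_iff]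

theorem preimage_arctan_Icc {m M : ℝ} (hm : m ∈ Ioo (-(π / 2)) (π / 2))
    (hM : M ∈ Ioo (-(π / 2)) (π / 2)) : arctan ⁻¹' Icc m M = Icc (tan m) (tan M) := by
  ext t
  conv_lhs => rw [← arctan_tan hm.1 hm.2, ← arctan_tan hM.1 hM.2]
  simp only [mem_preimage, mem_Icc, arctan_le_arctan_iff]

theorem hasSeparatedComponents_preimage_arctan_middleHalves (hW : IsOpen W)
    (hWI : W ⊆ Ioo (-(π / 2)) (π / 2)) :
    HasSeparatedComponents (arctan ⁻¹' middleHalves W) := by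
  have hWb : Bornology.IsBounded W := (Metric.isBounded_Ioo _ _).subset hWI
  intro x hx
  have hzW := middleHalves_subset W hx
  have hzI : arctan x ∈ Ioo (lowerEnd W (arctan x)) (upperEnd W (arctan x)) :=
    ⟨lowerEnd_lt hW hWb hzW, lt_upperEnd hW hWb hzW⟩
  have ha : -(π / 2) ≤ lowerEnd W (arctan x) :=
    le_lowerEnd (fun h => lt_irrefl _ (hWI h).1) (hWI hzW).1.le
  have hb : upperEnd W (arctan x) ≤ π / 2 :=
    upperEnd_le (fun h => lt_irrefl _ (hWI h).2) (hWI hzW).2.le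
  have hmid := Ioo_inter_middleHalves hW hWb hzW
  have hx' : arctan x ∈ Ioo (lowerEnd W (arctan x)) (upperEnd W (arctan x)) ∩ middleHalves W :=
    ⟨hzI, hx⟩
  rw [hmid] at hx'
  generalize lowerEnd W (arctan x) = a at *
  generalize upperEnd W (arctan x) = b at *
  have hm : a + (b - a) / 4 ∈ Ioo (-(π / 2)) (π / 2) := by
    constructor <;> linarith [hzI.1, hzI.2]
  have hM : a + 3 * (b - a) / 4 ∈ Ioo (-(π / 2)) (π / 2) := by
    constructor <;> linarith [hzI.1, hzI.2]
  rw [← mem_preimage, preimage_arctan_Ioo hm hM] at hx'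
  refine ⟨_, _, arctan ⁻¹' Ioo a b, hx', isOpen_Ioo.preimage continuous_arctan, ?_, ?_⟩
  · rw [← preimage_arctan_Icc hm hM]
    exact preimage_mono
      (Icc_subset_Ioo (by linarith [hzI.1, hzI.2]) (by linarith [hzI.1, hzI.2]))
  · rw [← preimage_inter, hmid, preimage_arctan_Ioo hm hM]

end ArctanConjugation

/-- every half strip can be shrunk, by a homeomorphism preserving the
second coordinate and fixed on ℝ×{0}, to a half strip whose upper boundary
intervals have bounded, pairwise disjoint closures. -/
theorem stmt_6 (S : Set (ℝ × ℝ)) (hS : IsHalfStrip S) :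
    ∃ (S' : Set (ℝ × ℝ)) (h : ℝ × ℝ → ℝ × ℝ),
      IsHalfStrip S' ∧ (univ ×ˢ Ico (0:ℝ) 1) ⊆ S' ∧ S' ⊆ S ∧
      (∀ p ∈ upBd S', Bornology.IsBounded (connectedComponentIn (upBd S') p)) ∧
      (∀ p ∈ upBd S', ∀ q ∈ upBd S',
        connectedComponentIn (upBd S') p ≠ connectedComponentIn (upBd S') q →
        closure (connectedComponentIn (upBd S') p) ∩
          closure (connectedComponentIn (upBd S') q) = ∅) ∧
      BijOn h S S' ∧ ContinuousOn h S ∧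
      (∃ g : ℝ × ℝ → ℝ × ℝ, InvOn g h S S' ∧ ContinuousOn g S') ∧
      (∀ x : ℝ, h (x, 0) = (x, 0)) ∧
      (∀ p ∈ S, (h p).2 = p.2) := by
  obtain ⟨U, hU, rfl⟩ := hS.exists_eq_halfStripOf
  set W := Ioo (-(π / 2)) (π / 2) ∩ tan ⁻¹' U
  have hW : IsOpen W := continuousOn_tan_Ioo.isOpen_inter_preimage isOpen_Ioo hU
  have hWI : W ⊆ Ioo (-(π / 2)) (π / 2) := inter_subset_left
  have hUW : arctan ⁻¹' W = U := by
    ext x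
    simp only [W, mem_preimage, mem_inter_iff, tan_arctan, arctan_mem_Ioo, true_and]
  rw [← hUW]
  have hV : IsOpen (arctan ⁻¹' middleHalves W) :=
    (isOpen_middleHalves hW ((Metric.isBounded_Ioo _ _).subset hWI)).preimage continuous_arctan
  obtain ⟨h, hbij, hcont, hinv, h₀, hsnd⟩ := exists_homeomorph_halfStripOf hV
    (fun y hy => arctanStretch_fiber hW hWI hy) (strictMonoOn_arctanStretch_one hW hWI)
    (mapsTo_arctanStretch_one hW hWI) (surjOn_arctanStretch_one hW hWI)
    (continuousOn_arctanStretch hW hWI) (arctanStretch_zero hW hWI)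
  have hsep := hasSeparatedComponents_preimage_arctan_middleHalves hW hWI
  refine ⟨_, h, isHalfStrip_halfStripOf hV, subset_union_left,
    halfStripOf_mono (preimage_mono (middleHalves_subset W)), ?_, ?_, hbij, hcont, hinv, h₀, hsnd⟩
  · rw [upBd_halfStripOf]
    exact fun p hp => hsep.isBounded_connectedComponentIn hp
  · rw [upBd_halfStripOf]
    exact fun p hp q hq => hsep.closure_connectedComponentIn_inter hp hq
end

section
/- In the surface Z = ℝ² \ K, where K = {(0, 1/n) : n ∈ ℕ} ∪ {(0,0)}, with the foliation Δ by connected components of horizontal lines, one has ω̂(α_n) = ω̂(β_n) = {α_n, β_n} for every n, where α_n = (-∞,0)×{1/n} and β_n = (0,∞)×{1/n}: the intersection of the closures of all saturated open neighbourhoods of α_n equals the union α_n ∪ β_n, and likewise for β_n. -/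
open Set

/-- K = {(0, 1/n) : n ≥ 1} ∪ {(0,0)}. -/
def Kset : Set (ℝ × ℝ) :=
  {p | ∃ n : ℕ, 1 ≤ n ∧ p = (0, 1 / (n : ℝ))} ∪ {(0, 0)}

/-- The surface Z = ℝ² \ K. -/
def Zsurf : Set (ℝ × ℝ) := Ksetᶜ

/-- The leaf of the foliation Δ through a point p ∈ Z: the connected component
of the horizontal section of Z containing p. -/
def leafThru (p : ℝ × ℝ) : Set (ℝ × ℝ) :=
  connectedComponentIn ({q : ℝ × ℝ | q.2 = p.2} ∩ Zsurf) p

/-- A subset of Z is saturated if it is a union of leaves. -/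
def Saturated (U : Set (ℝ × ℝ)) : Prop :=
  U ⊆ Zsurf ∧ ∀ p ∈ U, leafThru p ⊆ U

/-- A subset of Z is open in Z if it is the trace of an open subset of ℝ². -/
def OpenInZ (U : Set (ℝ × ℝ)) : Prop :=
  ∃ V : Set (ℝ × ℝ), IsOpen V ∧ U = V ∩ Zsurf

/-- ω̂ : the intersection of the closures (in Z) of all saturated open (in Z)
neighbourhoods of ω. -/
def hcl (ω : Set (ℝ × ℝ)) : Set (ℝ × ℝ) :=
  ⋂ U ∈ {U : Set (ℝ × ℝ) | Saturated U ∧ OpenInZ U ∧ ω ⊆ U}, (closure U ∩ Zsurf)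

/-- L is a leaf of Δ. -/
def IsLeafZ (L : Set (ℝ × ℝ)) : Prop := ∃ p ∈ Zsurf, L = leafThru p

/-- A leaf is special if ω̂ ≠ ω. -/
def SpecialLeaf (L : Set (ℝ × ℝ)) : Prop := IsLeafZ L ∧ hcl L ≠ L

lemma mem_Zsurf_of_fst_ne {x y : ℝ} (hx : x ≠ 0) : (x, y) ∈ Zsurf := by
  intro h
  rcases h with ⟨m, _, hm⟩ | h
  · exact hx (congrArg Prod.fst hm)
  · exact hx (congrArg Prod.fst h)

/-- y strictly between 1/(n+1) and 1/n is a "good" height: the full line at y lies in Z. -/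
lemma good_mem_Zsurf {n : ℕ} (hn : 1 ≤ n) {y : ℝ}
    (h1 : 1 / ((n : ℝ) + 1) < y) (h2 : y < 1 / (n : ℝ)) (x : ℝ) : (x, y) ∈ Zsurf := by
  have hnpos : (0:ℝ) < n := by exact_mod_cast hn
  have hy0 : 0 < y := lt_trans (by positivity) h1
  intro h
  rcases h with ⟨m, hm, hme⟩ | h
  · have hmy : y = 1 / (m : ℝ) := congrArg Prod.snd hme
    have hmpos : (0:ℝ) < m := by exact_mod_cast hm
    have h2' : 1 / (m : ℝ) < 1 / (n : ℝ) := hmy ▸ h2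
    have h1' : 1 / ((n : ℝ) + 1) < 1 / (m : ℝ) := hmy ▸ h1
    have hnm : (n : ℝ) < m := (one_div_lt_one_div hmpos hnpos).mp h2'
    have hmn : (m : ℝ) < n + 1 := (one_div_lt_one_div (by linarith) hmpos).mp h1'
    have : n < m := by exact_mod_cast hnm
    have : m < n + 1 := by exact_mod_cast hmn
    omega
  · have : y = 0 := congrArg Prod.snd h
    exact hy0.ne' this

lemma line_preconnected (y : ℝ) : IsPreconnected {q : ℝ × ℝ | q.2 = y} := by
  have : {q : ℝ × ℝ | q.2 = y} = (fun t : ℝ => (t, y)) '' univ := by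
    ext ⟨a, b⟩
    simp [Prod.ext_iff, eq_comm]
  rw [this]
  exact isPreconnected_univ.image _ (Continuous.continuousOn (by continuity))

lemma leaf_of_good {n : ℕ} (hn : 1 ≤ n) {y : ℝ}
    (h1 : 1 / ((n : ℝ) + 1) < y) (h2 : y < 1 / (n : ℝ)) (a : ℝ) :
    leafThru (a, y) = {q : ℝ × ℝ | q.2 = y} := by
  have hsub : {q : ℝ × ℝ | q.2 = y} ⊆ Zsurf := by
    rintro ⟨u, v⟩ hv
    simp only [mem_setOf_eq] at hv
    subst hv
    exact good_mem_Zsurf hn h1 h2 u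
  have heq : {q : ℝ × ℝ | q.2 = (a, y).2} ∩ Zsurf = {q : ℝ × ℝ | q.2 = y} :=
    inter_eq_left.mpr hsub
  rw [leafThru, heq]
  exact (line_preconnected y).connectedComponentIn rfl

/-- The open band (ℝ × I) ∩ Z is saturated and open in Z. -/
lemma band_saturated (I : Set ℝ) : Saturated (Prod.snd ⁻¹' I ∩ Zsurf) := by
  refine ⟨inter_subset_right, fun p hp q hq => ?_⟩
  have hq' := connectedComponentIn_subset _ _ hq
  exact ⟨by rw [mem_preimage, hq'.1]; exact hp.1, hq'.2⟩

lemma band_openInZ {I : Set ℝ} (hI : IsOpen I) : OpenInZ (Prod.snd ⁻¹' I ∩ Zsurf) :=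
  ⟨Prod.snd ⁻¹' I, hI.preimage continuous_snd, rfl⟩

/-- Key: if a saturated open-in-Z set contains a point of the line y = 1/n, then the whole
line y = 1/n lies in its closure. -/
lemma line_subset_closure {n : ℕ} (hn : 1 ≤ n) {U : Set (ℝ × ℝ)}
    (hsat : Saturated U) (hop : OpenInZ U) {a : ℝ} (ha : (a, 1 / (n : ℝ)) ∈ U)
    (x : ℝ) : (x, 1 / (n : ℝ)) ∈ closure U := by
  obtain ⟨V, hV, rfl⟩ := hop
  have hnpos : (0:ℝ) < n := by exact_mod_cast hn
  rw [Metric.mem_closure_iff]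
  intro ε hε
  obtain ⟨δ, hδ, hball⟩ := Metric.isOpen_iff.mp hV _ ha.1
  -- choose good y slightly below 1/n
  have hgap : 0 < 1 / (n : ℝ) - 1 / ((n : ℝ) + 1) := by
    rw [sub_pos]
    exact one_div_lt_one_div_of_lt hnpos (by linarith)
  set c := min (min ε δ) (1 / (n : ℝ) - 1 / ((n : ℝ) + 1)) / 2 with hc
  have hcpos : 0 < c := by positivity
  set y := 1 / (n : ℝ) - c with hy
  have hyd : |y - 1 / (n : ℝ)| = c := by
    rw [hy]; rw [abs_of_nonpos (by linarith)]; ring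
  have hmin : 0 < min (min ε δ) (1 / (n : ℝ) - 1 / ((n : ℝ) + 1)) :=
    lt_min (lt_min hε hδ) hgap
  have hclt : c < min (min ε δ) (1 / (n : ℝ) - 1 / ((n : ℝ) + 1)) := by
    rw [hc]; linarith
  have hce : c < ε := hclt.trans_le ((min_le_left _ _).trans (min_le_left _ _))
  have hcd : c < δ := hclt.trans_le ((min_le_left _ _).trans (min_le_right _ _))
  have hcg : c < 1 / (n : ℝ) - 1 / ((n : ℝ) + 1) := hclt.trans_le (min_le_right _ _)
  have hy1 : 1 / ((n : ℝ) + 1) < y := by rw [hy]; linarith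
  have hy2 : y < 1 / (n : ℝ) := by rw [hy]; linarith
  have hay : (a, y) ∈ V ∩ Zsurf := by
    constructor
    · apply hball
      rw [Metric.mem_ball, Prod.dist_eq, Real.dist_eq, Real.dist_eq]
      simp only [sub_self, abs_zero]
      rw [max_eq_right (abs_nonneg _), hyd]
      exact hcd
    · exact good_mem_Zsurf hn hy1 hy2 a
  have hxy : (x, y) ∈ V ∩ Zsurf := by
    apply hsat.2 _ hay
    rw [leaf_of_good hn hy1 hy2 a]
    rfl
  refine ⟨(x, y), hxy, ?_⟩
  rw [Prod.dist_eq, Real.dist_eq, Real.dist_eq]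
  simp only [sub_self, abs_zero]
  rw [max_eq_right (abs_nonneg _), abs_sub_comm, hyd]
  exact hce


lemma saturated_Zsurf : Saturated Zsurf :=
  ⟨subset_rfl, fun _ _ => (connectedComponentIn_subset _ _).trans inter_subset_right⟩

lemma openInZ_Zsurf : OpenInZ Zsurf := ⟨univ, isOpen_univ, (univ_inter _).symm⟩

lemma hcl_subset_line {n : ℕ} (hn : 1 ≤ n) {ω : Set (ℝ × ℝ)}
    (hω2 : ∀ q ∈ ω, q.2 = 1 / (n : ℝ)) (hωZ : ω ⊆ Zsurf) :
    hcl ω ⊆ (Iio (0:ℝ) ×ˢ ({1 / (n : ℝ)} : Set ℝ)) ∪ (Ioi (0:ℝ) ×ˢ ({1 / (n : ℝ)} : Set ℝ)) := by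
  intro p hp
  simp only [hcl, mem_setOf_eq, mem_iInter, mem_inter_iff] at hp
  have hpZ : p ∈ Zsurf := (hp Zsurf ⟨saturated_Zsurf, openInZ_Zsurf, hωZ⟩).2
  have h2 : p.2 = 1 / (n : ℝ) := by
    by_contra h2
    have habs : 0 < |p.2 - 1 / (n : ℝ)| := abs_pos.mpr (sub_ne_zero.mpr h2)
    set δ := |p.2 - 1 / (n : ℝ)| / 2 with hδ
    have hδpos : 0 < δ := by positivity
    set U := Prod.snd ⁻¹' Ioo (1 / (n : ℝ) - δ) (1 / (n : ℝ) + δ) ∩ Zsurf with hU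
    have hωU : ω ⊆ U := by
      intro q hq
      exact ⟨by rw [mem_preimage, hω2 q hq]; exact ⟨by linarith, by linarith⟩, hωZ hq⟩
    have hcl := (hp U ⟨band_saturated _, band_openInZ isOpen_Ioo, hωU⟩).1
    have h1 : closure U ⊆ Prod.snd ⁻¹' closure (Ioo (1 / (n : ℝ) - δ) (1 / (n : ℝ) + δ)) :=
      (closure_mono inter_subset_left).trans
        (Continuous.closure_preimage_subset continuous_snd _)
    have h3 : p.2 ∈ closure (Ioo (1 / (n : ℝ) - δ) (1 / (n : ℝ) + δ)) := h1 hcl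
    have h4 : p.2 ∈ Icc (1 / (n : ℝ) - δ) (1 / (n : ℝ) + δ) :=
      closure_minimal Ioo_subset_Icc_self isClosed_Icc h3
    have h5 : |p.2 - 1 / (n : ℝ)| ≤ δ := abs_le.mpr ⟨by linarith [h4.1], by linarith [h4.2]⟩
    linarith
  have h1 : p.1 ≠ 0 := by
    intro h1
    exact hpZ (Or.inl ⟨n, hn, by rw [← h1, ← h2]⟩)
  rcases h1.lt_or_gt with h | h
  · exact Or.inl ⟨h, h2⟩
  · exact Or.inr ⟨h, h2⟩

lemma hcl_half {n : ℕ} (hn : 1 ≤ n) {ω : Set (ℝ × ℝ)}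
    (hω2 : ∀ q ∈ ω, q.2 = 1 / (n : ℝ)) (hωZ : ω ⊆ Zsurf)
    {a : ℝ} (haω : (a, 1 / (n : ℝ)) ∈ ω) :
    hcl ω = (Iio (0:ℝ) ×ˢ ({1 / (n : ℝ)} : Set ℝ)) ∪ (Ioi (0:ℝ) ×ˢ ({1 / (n : ℝ)} : Set ℝ)) := by
  refine subset_antisymm (hcl_subset_line hn hω2 hωZ) ?_
  intro q hq
  have hq2 : q.2 = 1 / (n : ℝ) := by rcases hq with ⟨_, h⟩ | ⟨_, h⟩ <;> exact h
  have hq1 : q.1 ≠ 0 := by rcases hq with ⟨h, _⟩ | ⟨h, _⟩; exacts [ne_of_lt h, ne_of_gt h]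
  simp only [hcl, mem_setOf_eq, mem_iInter, mem_inter_iff]
  rintro U ⟨hsat, hop, hωU⟩
  refine ⟨?_, by rw [← Prod.mk.eta (p := q), hq2]; exact mem_Zsurf_of_fst_ne hq1⟩
  have := line_subset_closure hn hsat hop (hωU haω) q.1
  rwa [← Prod.mk.eta (p := q), hq2]


/-- for the leaves α_n = (-∞,0)×{1/n} and β_n = (0,∞)×{1/n} of the
foliation of Z = ℝ² \ K one has ω̂(α_n) = ω̂(β_n) = α_n ∪ β_n. -/
theorem stmt_17 (n : ℕ) (hn : 1 ≤ n) :
    hcl (Iio (0:ℝ) ×ˢ ({1 / (n : ℝ)} : Set ℝ)) =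
      (Iio (0:ℝ) ×ˢ ({1 / (n : ℝ)} : Set ℝ)) ∪
        (Ioi (0:ℝ) ×ˢ ({1 / (n : ℝ)} : Set ℝ)) ∧
    hcl (Ioi (0:ℝ) ×ˢ ({1 / (n : ℝ)} : Set ℝ)) =
      (Iio (0:ℝ) ×ˢ ({1 / (n : ℝ)} : Set ℝ)) ∪
        (Ioi (0:ℝ) ×ˢ ({1 / (n : ℝ)} : Set ℝ)) := by
  constructor
  · refine hcl_half hn (fun q hq => hq.2) ?_ (a := -1) ⟨by norm_num, rfl⟩
    rintro ⟨x, y⟩ ⟨hx, hy⟩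
    exact mem_Zsurf_of_fst_ne (ne_of_lt hx)
  · refine hcl_half hn (fun q hq => hq.2) ?_ (a := 1) ⟨by norm_num, rfl⟩
    rintro ⟨x, y⟩ ⟨hx, hy⟩
    exact mem_Zsurf_of_fst_ne (ne_of_gt hx)
end
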